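/- With U, Σ, C, U_Σ, H and L₂^Σ as in the context, ‖·‖_{L₂^Σ} is a norm on L₂^Σ and (L₂^Σ, ‖·‖_{L₂^Σ}) is a Banach space, i.e. it is complete. -/

import Mathlib

open Filter
open scoped InnerProductSpace ENNReal NNReal Topology

noncomputable section

variable {U : Type*} [NormedAddCommGroup U] [InnerProductSpace ℝ U] [CompleteSpace U]
variable {H : Type*} [NormedAddCommGroup H] [InnerProductSpace ℝ H] [CompleteSpace H]

/-- The norm of `u` in the range of `S` (i.e. of `Q^{1/2}(U)` when `S = Q^{1/2}`):
`‖u‖ = inf { ‖v‖ : S v = u }`. -/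
def rangeNorm (S : U →L[ℝ] U) (u : U) : ℝ :=
  sInf {r : ℝ | ∃ v : U, S v = u ∧ r = ‖v‖}

/-- Membership in `U_Σ`: `u` admits a representation `u = ∑ᵢ uᵢ` (convergent in `U`) with
`uᵢ ∈ Qᵢ^{1/2}(U)`, `Qᵢ ∈ Σ`, and `∑ᵢ ‖uᵢ‖_{Qᵢ^{1/2}(U)} < ∞`.  Here `R Q` denotes the
positive square root `Q^{1/2}`. -/
def MemUSigma (Sig : Set (U →L[ℝ] U)) (R : (U →L[ℝ] U) → U →L[ℝ] U) (u : U) : Prop :=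
  ∃ (Q : ℕ → U →L[ℝ] U) (v : ℕ → U),
    (∀ i, Q i ∈ Sig) ∧ (∀ i, v i ∈ Set.range (R (Q i))) ∧
    HasSum v u ∧ Summable (fun i => rangeNorm (R (Q i)) (v i))

/-- The norm on `U_Σ`: the infimum of `∑ᵢ ‖uᵢ‖_{Qᵢ^{1/2}(U)}` over all representations. -/
def normUSigma (Sig : Set (U →L[ℝ] U)) (R : (U →L[ℝ] U) → U →L[ℝ] U) (u : U) : ℝ :=
  sInf {r : ℝ | ∃ (Q : ℕ → U →L[ℝ] U) (v : ℕ → U),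
    (∀ i, Q i ∈ Sig) ∧ (∀ i, v i ∈ Set.range (R (Q i))) ∧
    HasSum v u ∧ Summable (fun i => rangeNorm (R (Q i)) (v i)) ∧
    r = ∑' i, rangeNorm (R (Q i)) (v i)}

/-- The square of the `L₂^Σ`-norm of a linear map `Φ` (considered on `U_Σ`):
`‖Φ‖²_{L₂^Σ} = sup_{Q∈Σ} ‖Φ ∘ Q^{1/2}‖²_{L₂(U,H)}`, the Hilbert–Schmidt norm being
computed via the orthonormal basis `bU`; valued in `ℝ≥0∞`. -/
def l2SigmaNormSq (bU : HilbertBasis ℕ ℝ U) (Sig : Set (U →L[ℝ] U))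
    (R : (U →L[ℝ] U) → U →L[ℝ] U) (Φ : U →ₗ[ℝ] H) : ℝ≥0∞ :=
  ⨆ Q ∈ Sig, ∑' i : ℕ, (‖Φ (R Q (bU i))‖₊ : ℝ≥0∞) ^ 2

/-- The `L₂^Σ`-norm, as a real number. -/
def l2SigmaNorm (bU : HilbertBasis ℕ ℝ U) (Sig : Set (U →L[ℝ] U))
    (R : (U →L[ℝ] U) → U →L[ℝ] U) (Φ : U →ₗ[ℝ] H) : ℝ :=
  Real.sqrt (l2SigmaNormSq bU Sig R Φ).toReal

/-- Membership in `L₂^Σ`: `Φ` is a bounded operator `(U_Σ, ‖·‖_{U_Σ}) → H` with finite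
`L₂^Σ`-norm. -/
def MemL2Sigma (bU : HilbertBasis ℕ ℝ U) (Sig : Set (U →L[ℝ] U))
    (R : (U →L[ℝ] U) → U →L[ℝ] U) (Φ : U →ₗ[ℝ] H) : Prop :=
  (∃ K : ℝ, ∀ u : U, MemUSigma Sig R u → ‖Φ u‖ ≤ K * normUSigma Sig R u) ∧
    l2SigmaNormSq bU Sig R Φ ≠ ∞

/-! A bounded operator `Φ` on `U_Σ` satisfies `‖Φ u‖ ≤ ‖Φ‖_{L₂^Σ} ‖u‖_{U_Σ}`. For `u = Q^{1/2} w`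
this is the bound of the operator norm of `Φ ∘ Q^{1/2}` by its Hilbert–Schmidt norm (the
operator `Φ ∘ Q^{1/2}` is continuous because `Φ` is bounded on `U_Σ`); it passes to the series
defining `U_Σ`, whose tails are small in `U_Σ`. Hence `‖·‖_{L₂^Σ}` vanishes exactly on the
operators vanishing on `U_Σ`, and an `L₂^Σ`-Cauchy sequence converges pointwise on `U_Σ`. Any
linear extension of the pointwise limit to `U` is the `L₂^Σ`-limit, since finite partial sums of
the Hilbert–Schmidt series pass to pointwise limits. -/

theorem le_mul_sInf_of_forall_le_mul {s : Set ℝ} (hs : s.Nonempty) {a c : ℝ} (hc : 0 ≤ c)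
    (h : ∀ r ∈ s, a ≤ c * r) : a ≤ c * sInf s := by
  rw [← smul_eq_mul, ← Real.sInf_smul_of_nonneg hc]
  exact le_csInf hs.smul_set (Set.forall_mem_image.2 h)

theorem sum_norm_add_sq_le {ι E : Type*} [SeminormedAddCommGroup E] (s : Finset ι) (f g : ι → E)
    {a b : ℝ} (ha : 0 ≤ a) (hb : 0 ≤ b) (hf : ∑ i ∈ s, ‖f i‖ ^ 2 ≤ a ^ 2)
    (hg : ∑ i ∈ s, ‖g i‖ ^ 2 ≤ b ^ 2) : ∑ i ∈ s, ‖f i + g i‖ ^ 2 ≤ (a + b) ^ 2 := by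
  have hfg : ∑ i ∈ s, ‖f i‖ * ‖g i‖ ≤ a * b :=
    (Real.sum_mul_le_sqrt_mul_sqrt s _ _).trans <| mul_le_mul ((Real.sqrt_le_left ha).2 hf)
      ((Real.sqrt_le_left hb).2 hg) (Real.sqrt_nonneg _) ha
  calc ∑ i ∈ s, ‖f i + g i‖ ^ 2 ≤ ∑ i ∈ s, (‖f i‖ + ‖g i‖) ^ 2 :=
        Finset.sum_le_sum fun _ _ => pow_le_pow_left₀ (norm_nonneg _) (norm_add_le _ _) 2
    _ = ∑ i ∈ s, ‖f i‖ ^ 2 + 2 * ∑ i ∈ s, ‖f i‖ * ‖g i‖ + ∑ i ∈ s, ‖g i‖ ^ 2 := by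
        simp only [add_sq, Finset.sum_add_distrib, Finset.mul_sum, mul_assoc]
    _ ≤ a ^ 2 + 2 * (a * b) + b ^ 2 := by gcongr
    _ = (a + b) ^ 2 := by ring

theorem HilbertBasis.norm_apply_le_of_sum_norm_sq_le {ι E F : Type*} [NormedAddCommGroup E]
    [InnerProductSpace ℝ E] [SeminormedAddCommGroup F] [NormedSpace ℝ F] (b : HilbertBasis ι ℝ E)
    (T : E →L[ℝ] F) {c : ℝ} (hc : 0 ≤ c) (h : ∀ s : Finset ι, ∑ i ∈ s, ‖T (b i)‖ ^ 2 ≤ c ^ 2)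
    (x : E) : ‖T x‖ ≤ c * ‖x‖ := by
  have hT : HasSum (fun i => b.repr x i • T (b i)) (T x) := by
    simpa using (b.hasSum_repr x).mapL T
  refine le_of_tendsto' hT.norm fun s => ?_
  have hbessel : ∑ i ∈ s, ‖b.repr x i‖ ^ 2 ≤ ‖x‖ ^ 2 := by
    simpa only [b.repr_apply_apply] using b.orthonormal.sum_inner_products_le x
  calc ‖∑ i ∈ s, b.repr x i • T (b i)‖ ≤ ∑ i ∈ s, ‖b.repr x i‖ * ‖T (b i)‖ :=
        norm_sum_le_of_le s fun i _ => (norm_smul _ _).le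
    _ ≤ √(∑ i ∈ s, ‖b.repr x i‖ ^ 2) * √(∑ i ∈ s, ‖T (b i)‖ ^ 2) :=
        Real.sum_mul_le_sqrt_mul_sqrt _ _ _
    _ ≤ ‖x‖ * c := mul_le_mul ((Real.sqrt_le_left (norm_nonneg x)).2 hbessel)
        ((Real.sqrt_le_left hc).2 (h s)) (Real.sqrt_nonneg _) (norm_nonneg x)
    _ = c * ‖x‖ := mul_comm _ _

section ConvergenceDomain

variable {α K M N : Type*} [DivisionRing K] [AddCommGroup M] [Module K M] [AddCommGroup N]
  [Module K N] [TopologicalSpace N] [ContinuousAdd N] [ContinuousConstSMul K N]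

def convergenceDomain (l : Filter α) (f : α → M →ₗ[K] N) : Submodule K M where
  carrier := {x | ∃ y, Tendsto (fun a => f a x) l (𝓝 y)}
  zero_mem' := ⟨0, by simpa using tendsto_const_nhds⟩
  add_mem' := fun ⟨y, hy⟩ ⟨z, hz⟩ => ⟨y + z, by simpa using hy.add hz⟩
  smul_mem' := fun c _ ⟨y, hy⟩ => ⟨c • y, by simpa using hy.const_smul c⟩

theorem exists_linearMap_tendsto [T2Space N] {l : Filter α} [l.NeBot] (f : α → M →ₗ[K] N) :
    ∃ g : M →ₗ[K] N, ∀ x ∈ convergenceDomain l f, Tendsto (fun a => f a x) l (𝓝 (g x)) := by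
  let D := convergenceDomain l f
  let g₀ : D →ₗ[K] N := linearMapOfTendsto (fun x : D => limUnder l fun a => f a x)
    (fun a => (f a).domRestrict D) (tendsto_pi_nhds.2 fun x => tendsto_nhds_limUnder x.2)
  obtain ⟨g, hg⟩ := LinearMap.exists_extend g₀
  refine ⟨g, fun x hx => ?_⟩
  rw [show g x = g₀ ⟨x, hx⟩ from LinearMap.congr_fun hg ⟨x, hx⟩]
  exact tendsto_nhds_limUnder hx

end ConvergenceDomain

section L2Sigma

variable {E F : Type*} [NormedAddCommGroup E] [InnerProductSpace ℝ E] [NormedAddCommGroup F]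
  [InnerProductSpace ℝ F] {Sig : Set (E →L[ℝ] E)} {R : (E →L[ℝ] E) → E →L[ℝ] E}
  {bU : HilbertBasis ℕ ℝ E} {Φ Ψ : E →ₗ[ℝ] F}

theorem rangeNorm_nonneg (S : E →L[ℝ] E) (u : E) : 0 ≤ rangeNorm S u :=
  Real.sInf_nonneg <| by rintro r ⟨v, -, rfl⟩; exact norm_nonneg v

theorem rangeNorm_le {S : E →L[ℝ] E} {u v : E} (h : S v = u) : rangeNorm S u ≤ ‖v‖ :=
  csInf_le ⟨0, by rintro r ⟨w, -, rfl⟩; exact norm_nonneg w⟩ ⟨v, h, rfl⟩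

theorem rangeNorm_zero (S : E →L[ℝ] E) : rangeNorm S 0 = 0 :=
  le_antisymm (by simpa using rangeNorm_le (map_zero S)) (rangeNorm_nonneg S 0)

theorem normUSigma_nonneg (u : E) : 0 ≤ normUSigma Sig R u :=
  Real.sInf_nonneg <| by
    rintro r ⟨Q, v, -, -, -, -, rfl⟩
    exact tsum_nonneg fun i => rangeNorm_nonneg _ _

theorem normUSigma_le_tsum {u : E} {Q : ℕ → E →L[ℝ] E} {v : ℕ → E} (hQ : ∀ i, Q i ∈ Sig)
    (hv : ∀ i, v i ∈ Set.range (R (Q i))) (hsum : HasSum v u)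
    (hs : Summable fun i => rangeNorm (R (Q i)) (v i)) :
    normUSigma Sig R u ≤ ∑' i, rangeNorm (R (Q i)) (v i) :=
  csInf_le ⟨0, fun _ ⟨_, _, _, _, _, _, hr⟩ => hr ▸ tsum_nonneg fun _ => rangeNorm_nonneg _ _⟩
    ⟨Q, v, hQ, hv, hsum, hs, rfl⟩

theorem memUSigma_apply_and_normUSigma_apply_le {Q : E →L[ℝ] E} (hQ : Q ∈ Sig) (w : E) :
    MemUSigma Sig R (R Q w) ∧ normUSigma Sig R (R Q w) ≤ ‖w‖ := by
  classical
  let v : ℕ → E := Pi.single 0 (R Q w)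
  have hv : ∀ i, v i ∈ Set.range (R Q) := fun i => by
    rcases eq_or_ne i 0 with rfl | hi
    · exact ⟨w, by simp [v]⟩
    · exact ⟨0, by simp [v, hi]⟩
  have hs : HasSum (fun i => rangeNorm (R Q) (v i)) (rangeNorm (R Q) (R Q w)) := by
    convert hasSum_pi_single 0 (rangeNorm (R Q) (R Q w)) using 2 with i
    rcases eq_or_ne i 0 with rfl | hi <;> simp [v, *, rangeNorm_zero]
  refine ⟨⟨fun _ => Q, v, fun _ => hQ, hv, hasSum_pi_single 0 _, hs.summable⟩, ?_⟩
  calc normUSigma Sig R (R Q w) ≤ ∑' i, rangeNorm (R Q) (v i) :=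
        normUSigma_le_tsum (fun _ => hQ) hv (hasSum_pi_single 0 _) hs.summable
    _ ≤ ‖w‖ := hs.tsum_eq ▸ rangeNorm_le rfl

theorem l2SigmaNorm_nonneg : 0 ≤ l2SigmaNorm bU Sig R Φ := Real.sqrt_nonneg _

theorem sum_norm_sq_le_l2SigmaNorm_sq (hfin : l2SigmaNormSq bU Sig R Φ ≠ ∞) {Q : E →L[ℝ] E}
    (hQ : Q ∈ Sig) (s : Finset ℕ) :
    ∑ i ∈ s, ‖Φ (R Q (bU i))‖ ^ 2 ≤ l2SigmaNorm bU Sig R Φ ^ 2 := by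
  have h : ∑ i ∈ s, (‖Φ (R Q (bU i))‖₊ : ℝ≥0∞) ^ 2 ≤ l2SigmaNormSq bU Sig R Φ :=
    (ENNReal.sum_le_tsum s).trans <|
      le_iSup₂ (f := fun Q (_ : Q ∈ Sig) => ∑' i, (‖Φ (R Q (bU i))‖₊ : ℝ≥0∞) ^ 2) Q hQ
  rw [l2SigmaNorm, Real.sq_sqrt ENNReal.toReal_nonneg]
  simpa [ENNReal.toReal_sum] using ENNReal.toReal_mono hfin h

theorem l2SigmaNormSq_le_of_sum_norm_sq_le {c : ℝ}
    (h : ∀ Q ∈ Sig, ∀ s : Finset ℕ, ∑ i ∈ s, ‖Φ (R Q (bU i))‖ ^ 2 ≤ c ^ 2) :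
    l2SigmaNormSq bU Sig R Φ ≤ ENNReal.ofReal (c ^ 2) := by
  refine iSup₂_le fun Q hQ => tsum_le_of_sum_le' zero_le fun s => ?_
  have hsq : ∀ x : F, (‖x‖₊ : ℝ≥0∞) ^ 2 = ENNReal.ofReal (‖x‖ ^ 2) := fun x => by
    rw [ENNReal.ofReal_pow (norm_nonneg x), ofReal_norm]; rfl
  simp only [hsq]
  rw [← ENNReal.ofReal_sum_of_nonneg fun i _ => by positivity]
  exact ENNReal.ofReal_le_ofReal (h Q hQ s)

theorem l2SigmaNormSq_ne_top_of_sum_norm_sq_le {c : ℝ}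
    (h : ∀ Q ∈ Sig, ∀ s : Finset ℕ, ∑ i ∈ s, ‖Φ (R Q (bU i))‖ ^ 2 ≤ c ^ 2) :
    l2SigmaNormSq bU Sig R Φ ≠ ∞ :=
  ne_top_of_le_ne_top ENNReal.ofReal_ne_top (l2SigmaNormSq_le_of_sum_norm_sq_le h)

theorem l2SigmaNorm_le_of_sum_norm_sq_le {c : ℝ} (hc : 0 ≤ c)
    (h : ∀ Q ∈ Sig, ∀ s : Finset ℕ, ∑ i ∈ s, ‖Φ (R Q (bU i))‖ ^ 2 ≤ c ^ 2) :
    l2SigmaNorm bU Sig R Φ ≤ c := by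
  refine (Real.sqrt_le_left hc).2 ?_
  simpa [ENNReal.toReal_ofReal (sq_nonneg c)] using
    ENNReal.toReal_mono ENNReal.ofReal_ne_top (l2SigmaNormSq_le_of_sum_norm_sq_le h)

theorem l2SigmaNormSq_smul (c : ℝ) (Φ : E →ₗ[ℝ] F) :
    l2SigmaNormSq bU Sig R (c • Φ) = (‖c‖₊ : ℝ≥0∞) ^ 2 * l2SigmaNormSq bU Sig R Φ := by
  simp_rw [l2SigmaNormSq, LinearMap.smul_apply, nnnorm_smul, ENNReal.coe_mul, mul_pow,
    ENNReal.tsum_mul_left, ENNReal.mul_iSup]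

theorem l2SigmaNorm_smul (c : ℝ) (Φ : E →ₗ[ℝ] F) :
    l2SigmaNorm bU Sig R (c • Φ) = |c| * l2SigmaNorm bU Sig R Φ := by
  rw [l2SigmaNorm, l2SigmaNormSq_smul, ENNReal.toReal_mul, Real.sqrt_mul (by positivity)]
  simp [l2SigmaNorm, Real.sqrt_sq_eq_abs]

theorem MemL2Sigma.exists_bound (hΦ : MemL2Sigma bU Sig R Φ) :
    ∃ K, 0 ≤ K ∧ ∀ u, MemUSigma Sig R u → ‖Φ u‖ ≤ K * normUSigma Sig R u :=
  let ⟨⟨K, hK⟩, _⟩ := hΦ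
  ⟨max K 0, le_max_right _ _, fun u hu =>
    (hK u hu).trans (mul_le_mul_of_nonneg_right (le_max_left _ _) (normUSigma_nonneg u))⟩

theorem norm_apply_apply_le (hΦ : MemL2Sigma bU Sig R Φ) {Q : E →L[ℝ] E} (hQ : Q ∈ Sig) (w : E) :
    ‖Φ (R Q w)‖ ≤ l2SigmaNorm bU Sig R Φ * ‖w‖ := by
  obtain ⟨K, hK0, hK⟩ := hΦ.exists_bound
  let T : E →L[ℝ] F := (Φ ∘ₗ (R Q).toLinearMap).mkContinuous K fun x => by
    obtain ⟨hx, hnorm⟩ := memUSigma_apply_and_normUSigma_apply_le (R := R) hQ x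
    exact (hK _ hx).trans (mul_le_mul_of_nonneg_left hnorm hK0)
  exact bU.norm_apply_le_of_sum_norm_sq_le T l2SigmaNorm_nonneg
    (sum_norm_sq_le_l2SigmaNorm_sq hΦ.2 hQ) w

theorem norm_apply_le_mul_rangeNorm (hΦ : MemL2Sigma bU Sig R Φ) {Q : E →L[ℝ] E} (hQ : Q ∈ Sig)
    {v : E} (hv : v ∈ Set.range (R Q)) :
    ‖Φ v‖ ≤ l2SigmaNorm bU Sig R Φ * rangeNorm (R Q) v := by
  obtain ⟨w, rfl⟩ := hv
  refine le_mul_sInf_of_forall_le_mul ?_ l2SigmaNorm_nonneg ?_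
  · exact ⟨_, w, rfl, rfl⟩
  · rintro _ ⟨x, hx, rfl⟩
    exact hx ▸ norm_apply_apply_le hΦ hQ x

theorem norm_apply_le_of_hasSum (hΦ : MemL2Sigma bU Sig R Φ) {u : E} {Q : ℕ → E →L[ℝ] E}
    {v : ℕ → E} (hQ : ∀ i, Q i ∈ Sig) (hv : ∀ i, v i ∈ Set.range (R (Q i))) (hsum : HasSum v u)
    (hs : Summable fun i => rangeNorm (R (Q i)) (v i)) :
    ‖Φ u‖ ≤ l2SigmaNorm bU Sig R Φ * ∑' i, rangeNorm (R (Q i)) (v i) := by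
  obtain ⟨K, hK0, hK⟩ := hΦ.exists_bound
  have htail : ∀ n, ‖Φ u - Φ (∑ i ∈ Finset.range n, v i)‖
      ≤ K * ∑' i, rangeNorm (R (Q (i + n))) (v (i + n)) := fun n => by
    have hsum' : HasSum (fun i => v (i + n)) (u - ∑ i ∈ Finset.range n, v i) :=
      (hasSum_nat_add_iff' n).2 hsum
    have hs' : Summable fun i => rangeNorm (R (Q (i + n))) (v (i + n)) :=
      (summable_nat_add_iff n).2 hs
    rw [← map_sub]
    exact (hK _ ⟨_, _, fun _ => hQ _, fun _ => hv _, hsum', hs'⟩).trans <|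
      mul_le_mul_of_nonneg_left (normUSigma_le_tsum (fun _ => hQ _) (fun _ => hv _) hsum' hs') hK0
  have hlim : Tendsto (fun n => Φ (∑ i ∈ Finset.range n, v i)) atTop (𝓝 (Φ u)) := by
    rw [tendsto_iff_norm_sub_tendsto_zero]
    refine squeeze_zero_norm (fun n => ?_) (by simpa using (tendsto_sum_nat_add fun i => rangeNorm (R (Q i)) (v i)).const_mul K)
    rw [norm_norm, norm_sub_rev]
    exact htail n
  refine le_of_tendsto' hlim.norm fun n => ?_
  calc ‖Φ (∑ i ∈ Finset.range n, v i)‖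
      ≤ ∑ i ∈ Finset.range n, l2SigmaNorm bU Sig R Φ * rangeNorm (R (Q i)) (v i) := by
        rw [map_sum]
        exact norm_sum_le_of_le _ fun i _ => norm_apply_le_mul_rangeNorm hΦ (hQ i) (hv i)
    _ ≤ l2SigmaNorm bU Sig R Φ * ∑' i, rangeNorm (R (Q i)) (v i) := by
        rw [← Finset.mul_sum]
        exact mul_le_mul_of_nonneg_left
          (hs.sum_le_tsum _ fun i _ => rangeNorm_nonneg _ _) l2SigmaNorm_nonneg

theorem norm_apply_le (hΦ : MemL2Sigma bU Sig R Φ) {u : E} (hu : MemUSigma Sig R u) :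
    ‖Φ u‖ ≤ l2SigmaNorm bU Sig R Φ * normUSigma Sig R u := by
  obtain ⟨Q, v, hQ, hv, hsum, hs⟩ := hu
  refine le_mul_sInf_of_forall_le_mul ?_ l2SigmaNorm_nonneg ?_
  · exact ⟨_, Q, v, hQ, hv, hsum, hs, rfl⟩
  · rintro _ ⟨Q, v, hQ, hv, hsum, hs, rfl⟩
    exact norm_apply_le_of_hasSum hΦ hQ hv hsum hs

theorem memL2Sigma_zero : MemL2Sigma bU Sig R (0 : E →ₗ[ℝ] F) :=
  ⟨⟨0, fun _ _ => by simp⟩, l2SigmaNormSq_ne_top_of_sum_norm_sq_le (c := 0) fun _ _ _ => by simp⟩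

theorem sum_norm_sq_add_le (hΦ : l2SigmaNormSq bU Sig R Φ ≠ ∞)
    (hΨ : l2SigmaNormSq bU Sig R Ψ ≠ ∞) {Q : E →L[ℝ] E} (hQ : Q ∈ Sig) (s : Finset ℕ) :
    ∑ i ∈ s, ‖(Φ + Ψ) (R Q (bU i))‖ ^ 2
      ≤ (l2SigmaNorm bU Sig R Φ + l2SigmaNorm bU Sig R Ψ) ^ 2 :=
  sum_norm_add_sq_le s _ _ l2SigmaNorm_nonneg l2SigmaNorm_nonneg
    (sum_norm_sq_le_l2SigmaNorm_sq hΦ hQ s) (sum_norm_sq_le_l2SigmaNorm_sq hΨ hQ s)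

theorem MemL2Sigma.add (hΦ : MemL2Sigma bU Sig R Φ) (hΨ : MemL2Sigma bU Sig R Ψ) :
    MemL2Sigma bU Sig R (Φ + Ψ) := by
  obtain ⟨⟨K, hK⟩, hΦfin⟩ := hΦ
  obtain ⟨⟨L, hL⟩, hΨfin⟩ := hΨ
  refine ⟨⟨K + L, fun u hu => ?_⟩,
    l2SigmaNormSq_ne_top_of_sum_norm_sq_le fun _ hQ => sum_norm_sq_add_le hΦfin hΨfin hQ⟩
  rw [LinearMap.add_apply, add_mul]
  exact (norm_add_le _ _).trans (add_le_add (hK u hu) (hL u hu))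

theorem MemL2Sigma.smul (c : ℝ) (hΦ : MemL2Sigma bU Sig R Φ) : MemL2Sigma bU Sig R (c • Φ) := by
  obtain ⟨⟨K, hK⟩, hfin⟩ := hΦ
  refine ⟨⟨|c| * K, fun u hu => ?_⟩, ?_⟩
  · rw [LinearMap.smul_apply, norm_smul, Real.norm_eq_abs, mul_assoc]
    exact mul_le_mul_of_nonneg_left (hK u hu) (abs_nonneg c)
  · rw [l2SigmaNormSq_smul]
    exact ENNReal.mul_ne_top (by simp) hfin

theorem MemL2Sigma.sub (hΦ : MemL2Sigma bU Sig R Φ) (hΨ : MemL2Sigma bU Sig R Ψ) :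
    MemL2Sigma bU Sig R (Φ - Ψ) := by
  simpa [sub_eq_add_neg] using hΦ.add (hΨ.smul (-1))

theorem l2SigmaNorm_add_le (hΦ : l2SigmaNormSq bU Sig R Φ ≠ ∞)
    (hΨ : l2SigmaNormSq bU Sig R Ψ ≠ ∞) :
    l2SigmaNorm bU Sig R (Φ + Ψ) ≤ l2SigmaNorm bU Sig R Φ + l2SigmaNorm bU Sig R Ψ :=
  l2SigmaNorm_le_of_sum_norm_sq_le (add_nonneg l2SigmaNorm_nonneg l2SigmaNorm_nonneg)
    fun _ hQ => sum_norm_sq_add_le hΦ hΨ hQ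

theorem l2SigmaNorm_eq_zero_iff (hΦ : MemL2Sigma bU Sig R Φ) :
    l2SigmaNorm bU Sig R Φ = 0 ↔ ∀ u, MemUSigma Sig R u → Φ u = 0 := by
  refine ⟨fun h u hu => norm_le_zero_iff.1 ?_, fun h => le_antisymm ?_ l2SigmaNorm_nonneg⟩
  · simpa [h] using norm_apply_le hΦ hu
  · refine l2SigmaNorm_le_of_sum_norm_sq_le le_rfl fun Q hQ s => ?_
    simp [h _ (memUSigma_apply_and_normUSigma_apply_le hQ _).1]

theorem MemL2Sigma.of_tendsto {Ψ : ℕ → E →ₗ[ℝ] F} {c : ℝ}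
    (hlim : ∀ u, MemUSigma Sig R u → Tendsto (fun m => Ψ m u) atTop (𝓝 (Φ u)))
    (hΨ : ∀ᶠ m in atTop, MemL2Sigma bU Sig R (Ψ m) ∧ l2SigmaNorm bU Sig R (Ψ m) ≤ c) :
    MemL2Sigma bU Sig R Φ ∧ l2SigmaNorm bU Sig R Φ ≤ c := by
  have hc : 0 ≤ c := let ⟨_, _, h⟩ := hΨ.exists; l2SigmaNorm_nonneg.trans h
  have hsum : ∀ Q ∈ Sig, ∀ s : Finset ℕ, ∑ i ∈ s, ‖Φ (R Q (bU i))‖ ^ 2 ≤ c ^ 2 := by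
    intro Q hQ s
    refine le_of_tendsto (tendsto_finsetSum s fun i _ =>
      (hlim _ (memUSigma_apply_and_normUSigma_apply_le hQ _).1).norm.pow 2) ?_
    filter_upwards [hΨ] with m ⟨hm, hmc⟩
    exact (sum_norm_sq_le_l2SigmaNorm_sq hm.2 hQ s).trans (pow_le_pow_left₀ l2SigmaNorm_nonneg hmc 2)
  refine ⟨⟨⟨c, fun u hu => le_of_tendsto (hlim u hu).norm ?_⟩,
    l2SigmaNormSq_ne_top_of_sum_norm_sq_le hsum⟩, l2SigmaNorm_le_of_sum_norm_sq_le hc hsum⟩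
  filter_upwards [hΨ] with m ⟨hm, hmc⟩
  exact (norm_apply_le hm hu).trans (mul_le_mul_of_nonneg_right hmc (normUSigma_nonneg u))

variable [CompleteSpace F] {Φn : ℕ → E →ₗ[ℝ] F}

theorem mem_convergenceDomain_of_cauchy (hmem : ∀ n, MemL2Sigma bU Sig R (Φn n))
    (hcauchy : ∀ ε : ℝ, 0 < ε → ∃ N : ℕ, ∀ m ≥ N, ∀ n ≥ N,
      l2SigmaNorm bU Sig R (Φn m - Φn n) < ε) {u : E} (hu : MemUSigma Sig R u) :
    u ∈ convergenceDomain atTop Φn := by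
  refine cauchySeq_tendsto_of_complete (Metric.cauchySeq_iff.2 fun ε hε => ?_)
  have hν := normUSigma_nonneg (Sig := Sig) (R := R) u
  obtain ⟨N, hN⟩ := hcauchy (ε / (normUSigma Sig R u + 1)) (by positivity)
  refine ⟨N, fun m hm n hn => ?_⟩
  rw [dist_eq_norm, ← LinearMap.sub_apply]
  calc ‖(Φn m - Φn n) u‖ ≤ l2SigmaNorm bU Sig R (Φn m - Φn n) * normUSigma Sig R u :=
        norm_apply_le ((hmem m).sub (hmem n)) hu
    _ ≤ ε / (normUSigma Sig R u + 1) * normUSigma Sig R u :=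
        mul_le_mul_of_nonneg_right (hN m hm n hn).le hν
    _ < ε := by
        rw [div_mul_eq_mul_div, div_lt_iff₀ (by positivity)]
        linarith

theorem exists_tendsto_l2SigmaNorm_of_cauchy (hmem : ∀ n, MemL2Sigma bU Sig R (Φn n))
    (hcauchy : ∀ ε : ℝ, 0 < ε → ∃ N : ℕ, ∀ m ≥ N, ∀ n ≥ N,
      l2SigmaNorm bU Sig R (Φn m - Φn n) < ε) :
    ∃ Φ : E →ₗ[ℝ] F, MemL2Sigma bU Sig R Φ ∧
      Tendsto (fun n => l2SigmaNorm bU Sig R (Φn n - Φ)) atTop (𝓝 0) := by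
  obtain ⟨Φ, hΦ⟩ := exists_linearMap_tendsto (l := atTop) Φn
  have hclose : ∀ ε > 0, ∀ᶠ n in atTop,
      MemL2Sigma bU Sig R (Φn n - Φ) ∧ l2SigmaNorm bU Sig R (Φn n - Φ) ≤ ε := by
    intro ε hε
    obtain ⟨N, hN⟩ := hcauchy ε hε
    filter_upwards [eventually_ge_atTop N] with n hn
    refine MemL2Sigma.of_tendsto (Ψ := fun m => Φn n - Φn m) (fun u hu => ?_) ?_
    · simpa using (hΦ u (mem_convergenceDomain_of_cauchy hmem hcauchy hu)).const_sub (Φn n u)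
    · filter_upwards [eventually_ge_atTop N] with m hm
      exact ⟨(hmem n).sub (hmem m), (hN n hn m hm).le⟩
  obtain ⟨n, hn, -⟩ := (hclose 1 one_pos).exists
  refine ⟨Φ, by simpa using (hmem n).sub hn, tendsto_order.2 ⟨fun a ha => ?_, fun a ha => ?_⟩⟩
  · exact Eventually.of_forall fun n => ha.trans_le l2SigmaNorm_nonneg
  · filter_upwards [hclose (a / 2) (half_pos ha)] with n hn
    exact hn.2.trans_lt (half_lt_self ha)

end L2Sigma

theorem l2Sigma_banach_general
    (bU : HilbertBasis ℕ ℝ U)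
    (Sig : Set (U →L[ℝ] U))
    (R : (U →L[ℝ] U) → U →L[ℝ] U) :
    -- `L₂^Σ` is a linear space
    (MemL2Sigma bU Sig R (0 : U →ₗ[ℝ] H)) ∧
    (∀ Φ Ψ : U →ₗ[ℝ] H, MemL2Sigma bU Sig R Φ → MemL2Sigma bU Sig R Ψ →
       MemL2Sigma bU Sig R (Φ + Ψ)) ∧
    (∀ (c : ℝ) (Φ : U →ₗ[ℝ] H), MemL2Sigma bU Sig R Φ → MemL2Sigma bU Sig R (c • Φ)) ∧
    -- `‖·‖_{L₂^Σ}` is a norm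
    (∀ Φ : U →ₗ[ℝ] H, MemL2Sigma bU Sig R Φ → 0 ≤ l2SigmaNorm bU Sig R Φ) ∧
    (∀ Φ : U →ₗ[ℝ] H, MemL2Sigma bU Sig R Φ →
       (l2SigmaNorm bU Sig R Φ = 0 ↔ ∀ u : U, MemUSigma Sig R u → Φ u = 0)) ∧
    (∀ Φ Ψ : U →ₗ[ℝ] H, MemL2Sigma bU Sig R Φ → MemL2Sigma bU Sig R Ψ →
       l2SigmaNorm bU Sig R (Φ + Ψ) ≤ l2SigmaNorm bU Sig R Φ + l2SigmaNorm bU Sig R Ψ) ∧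
    (∀ (c : ℝ) (Φ : U →ₗ[ℝ] H), MemL2Sigma bU Sig R Φ →
       l2SigmaNorm bU Sig R (c • Φ) = |c| * l2SigmaNorm bU Sig R Φ) ∧
    -- `(L₂^Σ, ‖·‖_{L₂^Σ})` is complete
    (∀ Φn : ℕ → (U →ₗ[ℝ] H), (∀ n, MemL2Sigma bU Sig R (Φn n)) →
       (∀ ε : ℝ, 0 < ε → ∃ N : ℕ, ∀ m ≥ N, ∀ n ≥ N,
          l2SigmaNorm bU Sig R (Φn m - Φn n) < ε) →
       ∃ Φ : U →ₗ[ℝ] H, MemL2Sigma bU Sig R Φ ∧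
         Tendsto (fun n => l2SigmaNorm bU Sig R (Φn n - Φ)) atTop (𝓝 0)) :=
  ⟨memL2Sigma_zero, fun _ _ => MemL2Sigma.add, fun c _ hΦ => hΦ.smul c,
    fun _ _ => l2SigmaNorm_nonneg, fun _ => l2SigmaNorm_eq_zero_iff,
    fun _ _ hΦ hΨ => l2SigmaNorm_add_le hΦ.2 hΨ.2, fun c Φ _ => l2SigmaNorm_smul c Φ,
    fun _ => exists_tendsto_l2SigmaNorm_of_cauchy⟩

/-- `L₂^Σ` is a linear space, `‖·‖_{L₂^Σ}` is a norm on it (vanishing exactly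
on the operators that are zero on `U_Σ`), and `(L₂^Σ, ‖·‖_{L₂^Σ})` is complete, i.e. a
Banach space. -/
theorem l2Sigma_banach
    (bU : HilbertBasis ℕ ℝ U)
    (Sig : Set (U →L[ℝ] U)) (hne : Sig.Nonempty)
    (hpos : ∀ Q ∈ Sig, Q.IsPositive)
    (htc : ∀ Q ∈ Sig, Summable (fun i : ℕ => ⟪Q (bU i), bU i⟫_ℝ))
    (C : ℝ) (hC : 0 < C) (hbdd : ∀ Q ∈ Sig, ‖Q‖ ≤ C ^ 2)
    (R : (U →L[ℝ] U) → U →L[ℝ] U)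
    (hR : ∀ Q ∈ Sig, (R Q).IsPositive ∧ (R Q) ∘L (R Q) = Q) :
    -- `L₂^Σ` is a linear space
    (MemL2Sigma bU Sig R (0 : U →ₗ[ℝ] H)) ∧
    (∀ Φ Ψ : U →ₗ[ℝ] H, MemL2Sigma bU Sig R Φ → MemL2Sigma bU Sig R Ψ →
       MemL2Sigma bU Sig R (Φ + Ψ)) ∧
    (∀ (c : ℝ) (Φ : U →ₗ[ℝ] H), MemL2Sigma bU Sig R Φ → MemL2Sigma bU Sig R (c • Φ)) ∧
    -- `‖·‖_{L₂^Σ}` is a norm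
    (∀ Φ : U →ₗ[ℝ] H, MemL2Sigma bU Sig R Φ → 0 ≤ l2SigmaNorm bU Sig R Φ) ∧
    (∀ Φ : U →ₗ[ℝ] H, MemL2Sigma bU Sig R Φ →
       (l2SigmaNorm bU Sig R Φ = 0 ↔ ∀ u : U, MemUSigma Sig R u → Φ u = 0)) ∧
    (∀ Φ Ψ : U →ₗ[ℝ] H, MemL2Sigma bU Sig R Φ → MemL2Sigma bU Sig R Ψ →
       l2SigmaNorm bU Sig R (Φ + Ψ) ≤ l2SigmaNorm bU Sig R Φ + l2SigmaNorm bU Sig R Ψ) ∧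
    (∀ (c : ℝ) (Φ : U →ₗ[ℝ] H), MemL2Sigma bU Sig R Φ →
       l2SigmaNorm bU Sig R (c • Φ) = |c| * l2SigmaNorm bU Sig R Φ) ∧
    -- `(L₂^Σ, ‖·‖_{L₂^Σ})` is complete
    (∀ Φn : ℕ → (U →ₗ[ℝ] H), (∀ n, MemL2Sigma bU Sig R (Φn n)) →
       (∀ ε : ℝ, 0 < ε → ∃ N : ℕ, ∀ m ≥ N, ∀ n ≥ N,
          l2SigmaNorm bU Sig R (Φn m - Φn n) < ε) →
       ∃ Φ : U →ₗ[ℝ] H, MemL2Sigma bU Sig R Φ ∧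
         Tendsto (fun n => l2SigmaNorm bU Sig R (Φn n - Φ)) atTop (𝓝 0)) :=
  l2Sigma_banach_general bU Sig R

end
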